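/- Uniform-distribution bound on the continued moments: Let a > 0. For every integer ℓ ≥ 1 the function B_ℓ(z) = (1/(2a))∫_{−a}^a (λ − z)^{−ℓ} dλ, defined for Im z > 0, extends holomorphically to ℂ₊ ∪ {z ∈ ℂ : Re z ∈ (−a, a)}; moreover, if δ satisfies 1 ≤ δ ≤ a and δ(log δ + π) ≤ a, then this extension B̃_ℓ satisfies |B̃_ℓ(z)| ≤ δ^{−ℓ} for every integer ℓ ≥ 1 and every z with Re z ∈ (−a, a), |z − a| ≥ δ and |z + a| ≥ δ. -/

import Mathlib

/-
For `ℓ ≥ 2` the integrand has an elementary primitive, so `B_ℓ` is a difference of powers of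
`-a - z` and `a - z`; it continues to `ℂ \ {±a}` and is bounded by `δ^{1-ℓ} / (a (ℓ - 1)) ≤ δ^{-ℓ}`.

For `ℓ = 1`, `2a B_1(z) = L(z) := log (a - z) - log (z + a) + πi`, which continues across `(-a, a)`,
and the claim is `‖L‖ ≤ t := 2a / δ`, where `t ≥ 2π`. Above the axis `0 ≤ Im L ≤ π` and
`|Re L| ≤ log (1 + t)`, and `log (1 + t)² + π² ≤ t²`. Below the axis `Im L = 2π - Y`, where `Y` is
the sum of the angles `arctan ((a ∓ Re z) / (-Im z))`. If `‖z - a‖ ≤ ‖z + a‖`, then with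
`w = (a + Re z) / ‖z - a‖ ≤ t` one has `|Re L| ≤ log (1 + w²) / 2` and `Y ≥ arctan w`, so
`t² - (Im L)² ≥ Y (t + π) ≥ (w + π) arctan w ≥ log (1 + w²)² / 4 ≥ (Re L)²`.
-/

open MeasureTheory Complex Metric

noncomputable section

/-- The lattice `ℤ^d`. -/
abbrev Zd (d : ℕ) := Fin d → ℤ

/-- The Hilbert space `ℓ²(ℤ^d)` of square-summable complex functions. -/
abbrev ellTwo (d : ℕ) := lp (fun _ : Zd d => ℂ) 2

/-- `n` and `m` are nearest neighbours in `ℤ^d`: they differ by `1` in exactly one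
coordinate and agree in all others, i.e. `∑ i |nᵢ - mᵢ| = 1`. -/
def NN {d : ℕ} (n m : Zd d) : Prop := (∑ i, |n i - m i|) = 1

/-- The (finite) set of nearest neighbours of `n` in `ℤ^d`. -/
def nbrs {d : ℕ} (n : Zd d) : Finset (Zd d) :=
  Finset.univ.image fun p : Fin d × Bool =>
    Function.update n p.1 (n p.1 + if p.2 then 1 else -1)

/-- The matrix element `A(n,m) = ⟨δ_n, A δ_m⟩` of a bounded operator on `ℓ²(ℤ^d)`. -/
def entry {d : ℕ} (A : ellTwo d →L[ℂ] ellTwo d) (n m : Zd d) : ℂ :=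
  A (lp.single 2 m 1) n

/-- `Γ_k(n,m)`: paths of length `k` in `ℤ^d` from `n` to `m`. -/
def pathSet (d k : ℕ) (n m : Zd d) : Set (Fin (k+1) → Zd d) :=
  {γ | γ 0 = n ∧ γ (Fin.last k) = m ∧ ∀ j : Fin k, NN (γ j.castSucc) (γ j.succ)}

/-- `ν(γ,α)`: the number of indices `j ∈ {0,…,k}` with `γ_j = α`. -/
def nu {d k : ℕ} (γ : Fin (k+1) → Zd d) (α : Zd d) : ℕ :=
  (Finset.univ.filter fun j => γ j = α).card

/-- `B_ℓ(z) = ∫ (λ - z)^{-ℓ} dμ(λ)`. -/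
def B (μ : Measure ℝ) (ℓ : ℕ) (z : ℂ) : ℂ := ∫ lam, ((lam : ℂ) - z)⁻¹ ^ ℓ ∂μ

/-- `O_ρ = {z ∈ ℂ : dist(z, (a,b)) < ρ}`. -/
def Odist (a b ρ : ℝ) : Set ℂ := {z | Metric.infDist z (Complex.ofReal '' Set.Ioo a b) < ρ}

/-- The Euclidean norm of a lattice point `x ∈ ℤ^d ⊂ ℝ^d`. -/
def eucNorm {d : ℕ} (x : Zd d) : ℝ := Real.sqrt (∑ i, ((x i : ℝ))^2)

/-- `Γ_{k,ℓ}(n,m)`: two-block paths `(n₀,…,n_k,m₀,…,m_ℓ,m_{ℓ+1})` with `n₀ = n`,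
`m_{ℓ+1} = m`, nearest-neighbour steps within each block, `|n_k - m₀| ≤ R` and
`|m_ℓ - m_{ℓ+1}| ≤ R`. -/
def pathSet2 (d : ℕ) (R : ℝ) (k l : ℕ) (n m : Zd d) :
    Set ((Fin (k+1) → Zd d) × (Fin (l+2) → Zd d)) :=
  {γ | γ.1 0 = n ∧ γ.2 (Fin.last (l+1)) = m ∧
    (∀ i : Fin k, NN (γ.1 i.castSucc) (γ.1 i.succ)) ∧
    (∀ j : Fin l, NN (γ.2 j.castSucc.castSucc) (γ.2 j.succ.castSucc)) ∧
    eucNorm (γ.1 (Fin.last k) - γ.2 0) ≤ R ∧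
    eucNorm (γ.2 (Fin.last l).castSucc - γ.2 (Fin.last (l+1))) ≤ R}

/-- `ν₂(γ,α)` for the second block: the number of indices `j ∈ {0,…,ℓ}` with `m_j = α`. -/
def nu2 {d l : ℕ} (γ₂ : Fin (l+2) → Zd d) (α : Zd d) : ℕ :=
  (Finset.univ.filter fun j : Fin (l+1) => γ₂ j.castSucc = α).card

/-- `B_{k,ℓ}(z₁,z₂) = ∫ (λ-z₁)^{-k} (λ-z₂)^{-ℓ} dμ(λ)`. -/
def B2 (μ : Measure ℝ) (k l : ℕ) (p : ℂ × ℂ) : ℂ :=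
  ∫ lam, ((lam : ℂ) - p.1)⁻¹ ^ k * ((lam : ℂ) - p.2)⁻¹ ^ l ∂μ

/-- `{z ∈ ℂ : dist(z, [a,b]) < ρ}`. -/
def OdistI (a b ρ : ℝ) : Set ℂ := {z | Metric.infDist z (Complex.ofReal '' Set.Icc a b) < ρ}

open scoped Real

lemma log_le_div_exp_one {x : ℝ} (hx : 0 < x) : Real.log x ≤ x / Real.exp 1 := by
  have h := Real.log_le_sub_one_of_pos (div_pos hx (Real.exp_pos 1))
  rw [Real.log_div hx.ne' (Real.exp_ne_zero 1), Real.log_exp] at h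
  linarith

lemma div_sqrt_one_add_sq_le_arctan {x : ℝ} (hx : 0 ≤ x) : x / √(1 + x ^ 2) ≤ Real.arctan x := by
  have hy0 : 0 ≤ x / √(1 + x ^ 2) := by positivity
  have hy1 : x / √(1 + x ^ 2) ≤ 1 := by
    rw [div_le_one (by positivity), Real.le_sqrt hx (by positivity)]
    linarith
  rw [Real.arctan_eq_arcsin,
    Real.le_arcsin_iff_sin_le' ⟨by linarith [Real.pi_pos], by linarith [Real.pi_gt_three]⟩]
  exact Real.sin_le hy0

lemma sq_log_one_add_le_sub_sq_pi {t : ℝ} (ht : 2 * π ≤ t) :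
    Real.log (1 + t) ^ 2 ≤ t ^ 2 - π ^ 2 := by
  have hlog : Real.log (1 + t) ≤ t - π := by
    have he := Real.exp_one_gt_d9
    have hπ := Real.pi_gt_three
    calc Real.log (1 + t) ≤ (1 + t) / Real.exp 1 := log_le_div_exp_one (by linarith)
      _ ≤ t - π := by rw [div_le_iff₀ (Real.exp_pos 1)]; nlinarith
  have h0 : 0 ≤ Real.log (1 + t) := Real.log_nonneg (by linarith [Real.pi_pos])
  nlinarith [Real.pi_pos]

lemma sq_log_one_add_sq_le_mul_arctan {w : ℝ} (hw : 0 ≤ w) :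
    Real.log (1 + w ^ 2) ^ 2 ≤ 4 * (w + π) * Real.arctan w := by
  have hπ := Real.pi_gt_three
  have h0 : 0 ≤ Real.log (1 + w ^ 2) := Real.log_nonneg (by nlinarith)
  rcases le_total w 1 with hw1 | hw1
  · have hlog : Real.log (1 + w ^ 2) ≤ w ^ 2 := by
      linarith [Real.log_le_sub_one_of_pos (show 0 < 1 + w ^ 2 by positivity)]
    have harctan : w / 2 ≤ Real.arctan w := by
      refine le_trans ?_ (div_sqrt_one_add_sq_le_arctan hw)
      gcongr
      rw [Real.sqrt_le_left (by norm_num)]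
      nlinarith
    calc Real.log (1 + w ^ 2) ^ 2 ≤ (w ^ 2) ^ 2 := pow_le_pow_left₀ h0 hlog 2
      _ ≤ 4 * (w + π) * (w / 2) := by nlinarith [pow_le_one₀ hw hw1 (n := 3)]
      _ ≤ 4 * (w + π) * Real.arctan w := by gcongr
  · have harctan : π / 4 ≤ Real.arctan w := by
      rw [← Real.arctan_one]; exact Real.arctan_strictMono.monotone hw1
    set y := √(1 + w)
    have hy0 : 0 < y := Real.sqrt_pos.2 (by linarith)
    have hy2 : y ^ 2 = 1 + w := Real.sq_sqrt (by linarith)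
    have hlog : Real.log (1 + w ^ 2) ≤ 4 * (y / Real.exp 1) := by
      calc Real.log (1 + w ^ 2) ≤ Real.log ((y ^ 2) ^ 2) :=
            Real.log_le_log (by positivity) (by rw [hy2]; nlinarith)
        _ = 4 * Real.log y := by rw [← pow_mul, Real.log_pow]; norm_num
        _ ≤ 4 * (y / Real.exp 1) := by gcongr; exact log_le_div_exp_one hy0
    have he := Real.exp_one_gt_d9
    have hye : y / Real.exp 1 ≤ y / 2.7 := by gcongr; linarith
    calc Real.log (1 + w ^ 2) ^ 2 ≤ (4 * (y / 2.7)) ^ 2 := by gcongr; linarith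
      _ ≤ 4 * (w + π) * (π / 4) := by
        have h9 : 9 ≤ π * π := by nlinarith
        have h3 : 3 * w ≤ π * w := by nlinarith
        rw [mul_pow, div_pow, hy2]
        ring_nf
        nlinarith
      _ ≤ 4 * (w + π) * Real.arctan w := by gcongr

lemma sq_log_sub_log_add_sq_arctan_le {u u' v t : ℝ} (hu : 0 < u) (hu' : 0 < u') (hv : 0 < v)
    (ht : 2 * π ≤ t) (h : u + u' ≤ t * √(u ^ 2 + v ^ 2)) (h' : u + u' ≤ t * √(u' ^ 2 + v ^ 2)) :
    (Real.log √(u ^ 2 + v ^ 2) - Real.log √(u' ^ 2 + v ^ 2)) ^ 2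
      + (Real.arctan (v / u) + Real.arctan (v / u') + π) ^ 2 ≤ t ^ 2 := by
  wlog huu : u ≤ u' generalizing u u'
  · have := this hu' hu (by linarith) (by linarith) (le_of_not_ge huu)
    linarith
  set m := √(u ^ 2 + v ^ 2)
  set m' := √(u' ^ 2 + v ^ 2)
  set w := u' / m with hw
  set θ := Real.arctan (v / u) + Real.arctan (v / u') + π with hθ
  have hm0 : 0 < m := by positivity
  have hm2 : m ^ 2 = u ^ 2 + v ^ 2 := Real.sq_sqrt (by positivity)
  have hvm : v ≤ m := Real.le_sqrt_of_sq_le (by nlinarith)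
  have hw0 : 0 ≤ w := by positivity
  have hwt : w ≤ t := by rw [hw, div_le_iff₀ hm0]; linarith
  have hr0 : 0 ≤ Real.log m' - Real.log m := by
    have : m ≤ m' := Real.sqrt_le_sqrt (by nlinarith)
    linarith [Real.log_le_log hm0 this]
  have hr : Real.log m' - Real.log m ≤ Real.log (1 + w ^ 2) / 2 := by
    have hle : m' ≤ m * √(1 + w ^ 2) := by
      rw [← Real.sqrt_sq hm0.le, ← Real.sqrt_mul (sq_nonneg _)]
      apply Real.sqrt_le_sqrt
      rw [hw, mul_add, mul_one, div_pow, mul_div_cancel₀ _ (by positivity), hm2]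
      nlinarith
    have := Real.log_le_log (by positivity) hle
    rw [Real.log_mul hm0.ne' (by positivity),
      Real.log_sqrt (show 0 ≤ 1 + w ^ 2 by positivity)] at this
    linarith
  have harctan : Real.arctan w ≤ t - θ := by
    have e₁ : Real.arctan (v / u) = π / 2 - Real.arctan (u / v) := by
      rw [← Real.arctan_inv_of_pos (by positivity), inv_div]
    have e₂ : Real.arctan (v / u') = π / 2 - Real.arctan (u' / v) := by
      rw [← Real.arctan_inv_of_pos (by positivity), inv_div]
    have h₁ : 0 ≤ Real.arctan (u / v) := Real.arctan_nonneg.2 (by positivity)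
    have h₂ : Real.arctan w ≤ Real.arctan (u' / v) :=
      Real.arctan_strictMono.monotone (div_le_div_of_nonneg_left hu'.le hv hvm)
    linarith
  have hθπ : π ≤ θ := by
    have h₁ : 0 ≤ Real.arctan (v / u) := Real.arctan_nonneg.2 (by positivity)
    have h₂ : 0 ≤ Real.arctan (v / u') := Real.arctan_nonneg.2 (by positivity)
    linarith
  calc (Real.log m - Real.log m') ^ 2 + θ ^ 2
      ≤ (Real.log (1 + w ^ 2) / 2) ^ 2 + θ ^ 2 := by
        rw [← neg_sub, neg_sq]; gcongr
    _ ≤ (w + π) * Real.arctan w + θ ^ 2 := by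
        have := sq_log_one_add_sq_le_mul_arctan hw0; linarith
    _ ≤ (t + θ) * (t - θ) + θ ^ 2 := by
        linarith [mul_le_mul (by linarith : w + π ≤ t + θ) harctan (Real.arctan_nonneg.2 hw0)
          (by linarith [Real.pi_pos])]
    _ = t ^ 2 := by ring

lemma norm_le_of_sq_re_add_sq_im_le {w : ℂ} {t : ℝ} (ht : 0 ≤ t)
    (h : w.re ^ 2 + w.im ^ 2 ≤ t ^ 2) : ‖w‖ ≤ t := by
  rw [norm_eq_sqrt_sq_add_sq]
  exact Real.sqrt_le_iff.2 ⟨ht, h⟩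

lemma arg_eq_arctan_of_re_pos {x : ℂ} (hx : 0 < x.re) : arg x = Real.arctan (x.im / x.re) := by
  have h := abs_lt.1 (abs_arg_lt_pi_div_two_iff.2 (Or.inl hx))
  rw [← tan_arg, Real.arctan_tan h.1 h.2]

lemma abs_log_sub_log_le_log_one_add {x y t : ℝ} (hx : 0 < x) (hy : 0 < y)
    (hxy : x ≤ (1 + t) * y) (hyx : y ≤ (1 + t) * x) :
    |Real.log x - Real.log y| ≤ Real.log (1 + t) := by
  have ht : 0 < 1 + t := pos_of_mul_pos_left (hx.trans_le hxy) hy.le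
  have h₁ := Real.log_le_log hx hxy
  have h₂ := Real.log_le_log hy hyx
  rw [Real.log_mul ht.ne' hy.ne'] at h₁
  rw [Real.log_mul ht.ne' hx.ne'] at h₂
  exact abs_sub_le_iff.2 ⟨by linarith, by linarith⟩

-- On `ℂ₊`, `log (-a - z) = log (z + a) - πi`, so this is `∫_{-a}^{a} (λ - z)⁻¹ dλ` there.
def cauchyTransformCont (a : ℝ) (z : ℂ) : ℂ := log (a - z) - log (z + a) + π * I

lemma cauchyTransformCont_re (a : ℝ) (z : ℂ) :
    (cauchyTransformCont a z).re = Real.log ‖a - z‖ - Real.log ‖z + a‖ := by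
  simp [cauchyTransformCont, log_re]

lemma cauchyTransformCont_im (a : ℝ) (z : ℂ) :
    (cauchyTransformCont a z).im = arg (a - z) - arg (z + a) + π := by
  simp [cauchyTransformCont, log_im]

section CauchyTransformCont

variable {a t : ℝ} {z : ℂ}

lemma norm_cauchyTransformCont_le_of_nonneg_im (hz : z.re ∈ Set.Ioo (-a) a) (hy : 0 ≤ z.im)
    (ht : 2 * π ≤ t) (h₁ : 2 * a ≤ t * ‖a - z‖) (h₂ : 2 * a ≤ t * ‖z + a‖) :
    ‖cauchyTransformCont a z‖ ≤ t := by
  have hπ := Real.pi_pos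
  have ha : 0 < a := by linarith [hz.1, hz.2]
  have hp : 0 < ‖(a : ℂ) - z‖ := pos_of_mul_pos_right (a := t) (by linarith) (by linarith)
  have hq : 0 < ‖z + a‖ := pos_of_mul_pos_right (a := t) (by linarith) (by linarith)
  have hp_le : ‖(a : ℂ) - z‖ ≤ ‖z + a‖ + 2 * a := by
    calc ‖(a : ℂ) - z‖ = ‖((2 * a : ℝ) : ℂ) - (z + a)‖ := by congr 1; push_cast; ring
      _ ≤ ‖((2 * a : ℝ) : ℂ)‖ + ‖z + a‖ := norm_sub_le _ _
      _ = ‖z + a‖ + 2 * a := by rw [norm_real, Real.norm_of_nonneg (by linarith)]; ring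
  have hq_le : ‖z + a‖ ≤ ‖(a : ℂ) - z‖ + 2 * a := by
    calc ‖z + a‖ = ‖((2 * a : ℝ) : ℂ) - (a - z)‖ := by congr 1; push_cast; ring
      _ ≤ ‖((2 * a : ℝ) : ℂ)‖ + ‖(a : ℂ) - z‖ := norm_sub_le _ _
      _ = ‖(a : ℂ) - z‖ + 2 * a := by rw [norm_real, Real.norm_of_nonneg (by linarith)]; ring
  have hre := abs_log_sub_log_le_log_one_add (t := t) hp hq (by linarith) (by linarith)
  have hpre : 0 < ((a : ℂ) - z).re := by rw [sub_re, ofReal_re]; linarith [hz.2]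
  have hqre : 0 < (z + a).re := by rw [add_re, ofReal_re]; linarith [hz.1]
  have harg₁ : arg ((a : ℂ) - z) ≤ 0 := by
    rw [arg_eq_arctan_of_re_pos hpre, Real.arctan_le_zero]
    exact div_nonpos_of_nonpos_of_nonneg (by simpa using hy) hpre.le
  have harg₂ : 0 ≤ arg (z + a) := arg_nonneg_iff.2 (by simpa using hy)
  have harg₃ := neg_pi_div_two_lt_arg_iff.2 (Or.inl hpre)
  have harg₄ := arg_lt_pi_div_two_iff.2 (Or.inl hqre)
  apply norm_le_of_sq_re_add_sq_im_le (by linarith)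
  rw [cauchyTransformCont_re, cauchyTransformCont_im]
  have him : (arg ((a : ℂ) - z) - arg (z + a) + π) ^ 2 ≤ π ^ 2 := by
    apply sq_le_sq' <;> linarith
  have hre' : (Real.log ‖(a : ℂ) - z‖ - Real.log ‖z + a‖) ^ 2 ≤ Real.log (1 + t) ^ 2 := by
    rw [← sq_abs]; exact pow_le_pow_left₀ (abs_nonneg _) hre 2
  linarith [sq_log_one_add_le_sub_sq_pi ht]

lemma norm_cauchyTransformCont_le_of_im_neg (hz : z.re ∈ Set.Ioo (-a) a) (hy : z.im < 0)
    (ht : 2 * π ≤ t) (h₁ : 2 * a ≤ t * ‖a - z‖) (h₂ : 2 * a ≤ t * ‖z + a‖) :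
    ‖cauchyTransformCont a z‖ ≤ t := by
  have hpre : 0 < ((a : ℂ) - z).re := by rw [sub_re, ofReal_re]; linarith [hz.2]
  have hqre : 0 < (z + a).re := by rw [add_re, ofReal_re]; linarith [hz.1]
  have hp : ‖(a : ℂ) - z‖ = √((a - z.re) ^ 2 + (-z.im) ^ 2) := by
    simp [norm_eq_sqrt_sq_add_sq]
  have hq : ‖z + a‖ = √((z.re + a) ^ 2 + (-z.im) ^ 2) := by
    simp [norm_eq_sqrt_sq_add_sq]
  have key := sq_log_sub_log_add_sq_arctan_le (sub_pos.2 hz.2) (neg_lt_iff_pos_add.1 hz.1)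
    (neg_pos.2 hy) ht (by rw [← hp]; linarith) (by rw [← hq]; linarith)
  apply norm_le_of_sq_re_add_sq_im_le (by linarith [Real.pi_pos])
  rw [cauchyTransformCont_re, cauchyTransformCont_im, arg_eq_arctan_of_re_pos hpre,
    arg_eq_arctan_of_re_pos hqre, hp, hq]
  convert key using 3
  simp only [sub_im, ofReal_im, zero_sub, sub_re, ofReal_re, neg_div, Real.arctan_neg, add_im,
    add_zero, add_re, add_left_inj]
  ring

lemma norm_cauchyTransformCont_le (hz : z.re ∈ Set.Ioo (-a) a) (ht : 2 * π ≤ t)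
    (h₁ : 2 * a ≤ t * ‖a - z‖) (h₂ : 2 * a ≤ t * ‖z + a‖) : ‖cauchyTransformCont a z‖ ≤ t := by
  rcases le_or_gt 0 z.im with hy | hy
  · exact norm_cauchyTransformCont_le_of_nonneg_im hz hy ht h₁ h₂
  · exact norm_cauchyTransformCont_le_of_im_neg hz hy ht h₁ h₂

end CauchyTransformCont

lemma ofReal_sub_mem_slitPlane {z : ℂ} (hz : z.im ≠ 0) (x : ℝ) : (x : ℂ) - z ∈ slitPlane :=
  mem_slitPlane_iff.2 (Or.inr (by simpa using hz))

lemma integral_inv_ofReal_sub {z : ℂ} (hz : z.im ≠ 0) (b c : ℝ) :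
    ∫ x in b..c, ((x : ℂ) - z)⁻¹ = log (c - z) - log (b - z) := by
  refine intervalIntegral.integral_eq_sub_of_hasDerivAt (f := fun x : ℝ => log ((x : ℂ) - z))
    (fun x _ => ?_) ?_
  · exact (((hasDerivAt_id (x : ℂ)).sub_const z).clog
      (ofReal_sub_mem_slitPlane hz x)).comp_ofReal.congr_deriv (one_div _)
  · exact (continuous_ofReal.sub continuous_const).inv₀
      (fun x => slitPlane_ne_zero (ofReal_sub_mem_slitPlane hz x)) |>.intervalIntegrable _ _

lemma integral_inv_ofReal_sub_pow {z : ℂ} (hz : z.im ≠ 0) (b c : ℝ) (k : ℕ) :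
    ∫ x in b..c, ((x : ℂ) - z)⁻¹ ^ (k + 2)
      = ((((b : ℂ) - z) ^ (k + 1))⁻¹ - (((c : ℂ) - z) ^ (k + 1))⁻¹) / (k + 1) := by
  have hne (x : ℝ) : (x : ℂ) - z ≠ 0 := slitPlane_ne_zero (ofReal_sub_mem_slitPlane hz x)
  have hk : (k + 1 : ℂ) ≠ 0 := Nat.cast_add_one_ne_zero k
  rw [intervalIntegral.integral_eq_sub_of_hasDerivAt
    (f := fun x : ℝ => -(((x : ℂ) - z) ^ (k + 1))⁻¹ / (k + 1)) (fun x _ => ?_)]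
  · ring
  · exact ((continuous_ofReal.sub continuous_const).inv₀ hne).pow _ |>.intervalIntegrable _ _
  · have h := ((((hasDerivAt_id (x : ℂ)).sub_const z).pow (k + 1)).inv
      (pow_ne_zero _ (hne x))).neg.div_const (k + 1 : ℂ)
    refine h.comp_ofReal.congr_deriv ?_
    have hx := hne x
    simp only [id, Pi.pow_apply, Nat.add_sub_cancel, Nat.cast_add_one, inv_pow]
    field_simp
    ring

lemma log_neg_eq_log_sub_pi_mul_I {w : ℂ} (hw : 0 < w.im) : log (-w) = log w - π * I := by
  apply Complex.ext
  · simp [log_re]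
  · simp [log_im, arg_neg_eq_arg_sub_pi_of_im_pos hw]

def momentExt (a : ℝ) : ℕ → ℂ → ℂ
  | 0 => 1
  | 1 => fun z => (2 * (a : ℂ))⁻¹ * cauchyTransformCont a z
  | k + 2 => fun z =>
    (2 * (a : ℂ))⁻¹ * (((-a - z) ^ (k + 1))⁻¹ - ((a - z) ^ (k + 1))⁻¹) / (k + 1)

lemma momentExt_eq_integral {a : ℝ} (ha : 0 < a) (ℓ : ℕ) {z : ℂ} (hz : 0 < z.im) :
    momentExt a ℓ z = 1 / (2 * (a : ℂ)) * ∫ x in (-a)..a, ((x : ℂ) - z)⁻¹ ^ ℓ := by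
  have ha' : (a : ℂ) ≠ 0 := ofReal_ne_zero.2 ha.ne'
  obtain _ | _ | k := ℓ
  · simp only [momentExt, Pi.one_apply, pow_zero, intervalIntegral.integral_const,
      sub_neg_eq_add, real_smul, ofReal_add, mul_one]
    field_simp
    ring
  · have hlog : log (((-a : ℝ) : ℂ) - z) = log (z + a) - π * I := by
      rw [← log_neg_eq_log_sub_pi_mul_I (by simpa using hz)]
      congr 1; push_cast; ring
    simp only [momentExt, zero_add, pow_one, integral_inv_ofReal_sub hz.ne', hlog,
      cauchyTransformCont]
    ring
  · simp only [momentExt, integral_inv_ofReal_sub_pow hz.ne']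
    push_cast
    ring

lemma mem_slitPlane_of_mem_upperHalfPlane_union_strip {a : ℝ} {z : ℂ}
    (hz : z ∈ {z : ℂ | 0 < z.im} ∪ {z : ℂ | z.re ∈ Set.Ioo (-a) a}) :
    (a : ℂ) - z ∈ slitPlane ∧ z + a ∈ slitPlane := by
  simp only [mem_slitPlane_iff, sub_re, ofReal_re, sub_im, ofReal_im, add_re, add_im]
  rcases hz with (hz : 0 < z.im) | ⟨h₁, h₂⟩
  · exact ⟨Or.inr (by linarith), Or.inr (by linarith)⟩
  · exact ⟨Or.inl (by linarith), Or.inl (by linarith)⟩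

lemma differentiableOn_momentExt (a : ℝ) (ℓ : ℕ) :
    DifferentiableOn ℂ (momentExt a ℓ)
      ({z : ℂ | 0 < z.im} ∪ {z : ℂ | z.re ∈ Set.Ioo (-a) a}) := by
  intro z hz
  obtain ⟨hp, hq⟩ := mem_slitPlane_of_mem_upperHalfPlane_union_strip hz
  have hq' : -(a : ℂ) - z ≠ 0 := by
    rw [← neg_add', add_comm, neg_ne_zero]; exact slitPlane_ne_zero hq
  refine DifferentiableAt.differentiableWithinAt ?_
  obtain _ | _ | k := ℓ
  · exact differentiableAt_const _
  · exact (((differentiableAt_log hp).comp z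
      ((differentiableAt_const _).sub differentiableAt_id)).sub
      ((differentiableAt_log hq).comp z (differentiableAt_id.add_const _))).add_const _
      |>.const_mul _
  · refine (((((differentiableAt_const _).sub differentiableAt_id).pow _).inv ?_).sub
      ((((differentiableAt_const _).sub differentiableAt_id).pow _).inv ?_)).const_mul _
      |>.div_const _
    · exact pow_ne_zero _ hq'
    · exact pow_ne_zero _ (slitPlane_ne_zero hp)

section MomentExt

variable {a δ : ℝ} {z : ℂ}

lemma norm_momentExt_one_le (hz : z.re ∈ Set.Ioo (-a) a) (hδ : 0 < δ) (hπδ : π * δ ≤ a)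
    (h₁ : δ ≤ ‖z - a‖) (h₂ : δ ≤ ‖z + a‖) : ‖momentExt a 1 z‖ ≤ δ⁻¹ := by
  have ha : 0 < a := by nlinarith [Real.pi_pos]
  have hcont : ‖cauchyTransformCont a z‖ ≤ 2 * a / δ := by
    apply norm_cauchyTransformCont_le hz
    · rw [le_div_iff₀ hδ]; linarith
    · rw [norm_sub_rev, div_mul_eq_mul_div, le_div_iff₀ hδ]; gcongr
    · rw [div_mul_eq_mul_div, le_div_iff₀ hδ]; gcongr
  calc ‖momentExt a 1 z‖ = (2 * a)⁻¹ * ‖cauchyTransformCont a z‖ := by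
        simp [momentExt, ha.le]
    _ ≤ (2 * a)⁻¹ * (2 * a / δ) := by gcongr
    _ = δ⁻¹ := by field_simp

lemma norm_momentExt_add_two_le (hδ : 0 < δ) (hδa : δ ≤ a)
    (h₁ : δ ≤ ‖z - a‖) (h₂ : δ ≤ ‖z + a‖) (k : ℕ) :
    ‖momentExt a (k + 2) z‖ ≤ (δ ^ (k + 2))⁻¹ := by
  have ha : 0 < a := hδ.trans_le hδa
  have hpow {w : ℂ} (hw : δ ≤ ‖w‖) : ‖(w ^ (k + 1))⁻¹‖ ≤ (δ ^ (k + 1))⁻¹ := by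
    rw [norm_inv, norm_pow]; gcongr
  have hp := hpow (w := -a - z) (by rwa [← neg_add', norm_neg, add_comm])
  have hq := hpow (w := a - z) (by rwa [norm_sub_rev])
  calc ‖momentExt a (k + 2) z‖
      ≤ (2 * a)⁻¹ * (‖((-a - z) ^ (k + 1))⁻¹‖ + ‖((a - z) ^ (k + 1))⁻¹‖) / (k + 1) := by
        have h2a : ‖2 * (a : ℂ)‖ = 2 * a := by simp [ha.le]
        have hk : ‖(k : ℂ) + 1‖ = k + 1 := by exact_mod_cast Complex.norm_natCast (k + 1)
        simp only [momentExt, norm_div, norm_mul, norm_inv, h2a, hk]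
        gcongr
        exact (norm_sub_le _ _).trans_eq (by rw [norm_inv, norm_inv])
    _ ≤ (2 * a)⁻¹ * ((δ ^ (k + 1))⁻¹ + (δ ^ (k + 1))⁻¹) / 1 := by gcongr; linarith
    _ = (a * δ ^ (k + 1))⁻¹ := by field_simp; ring
    _ ≤ (δ ^ (k + 2))⁻¹ := inv_anti₀ (by positivity) (by rw [pow_succ, mul_comm]; gcongr)

end MomentExt

/-- **Uniform-distribution bound on the continued moments.** For `a > 0` and `ℓ ≥ 1`, the
function `B_ℓ(z) = (1/(2a)) ∫_{-a}^a (λ-z)^{-ℓ} dλ` (`Im z > 0`) extends holomorphically to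
`ℂ₊ ∪ {Re z ∈ (-a,a)}`; moreover if `1 ≤ δ ≤ a` and `δ(log δ + π) ≤ a`, then the extension
satisfies `|B̃_ℓ(z)| ≤ δ^{-ℓ}` for all `ℓ ≥ 1` and all `z` with `Re z ∈ (-a,a)`,
`|z - a| ≥ δ` and `|z + a| ≥ δ`. -/
theorem uniform_moment_bound (a : ℝ) (ha : 0 < a) :
    ∃ Bt : ℕ → ℂ → ℂ,
      (∀ ℓ : ℕ, 1 ≤ ℓ →
        DifferentiableOn ℂ (Bt ℓ)
          ({z : ℂ | 0 < z.im} ∪ {z : ℂ | z.re ∈ Set.Ioo (-a) a}) ∧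
        ∀ z : ℂ, 0 < z.im →
          Bt ℓ z = (1 / (2 * (a : ℂ))) * ∫ lam in (-a)..a, ((lam : ℂ) - z)⁻¹ ^ ℓ) ∧
      ∀ δ : ℝ, 1 ≤ δ → δ ≤ a → δ * (Real.log δ + Real.pi) ≤ a →
        ∀ ℓ : ℕ, 1 ≤ ℓ → ∀ z : ℂ, z.re ∈ Set.Ioo (-a) a →
          δ ≤ ‖z - (a : ℂ)‖ → δ ≤ ‖z + (a : ℂ)‖ →
          ‖Bt ℓ z‖ ≤ (δ ^ ℓ)⁻¹ := by
  refine ⟨momentExt a, fun ℓ _ => ⟨differentiableOn_momentExt a ℓ,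
    fun z hz => momentExt_eq_integral ha ℓ hz⟩, ?_⟩
  intro δ hδ₁ hδa hδlog ℓ hℓ z hz h₁ h₂
  have hδ : 0 < δ := one_pos.trans_le hδ₁
  obtain _ | _ | k := ℓ
  · omega
  · have hπδ : π * δ ≤ a := by nlinarith [Real.log_nonneg hδ₁]
    simpa using norm_momentExt_one_le hz hδ hπδ h₁ h₂
  · exact norm_momentExt_add_two_le hδ hδa h₁ h₂ k
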